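/- arXiv:2201.03702 — 2 statements merged into one kernel-verified Lean document; each statement's English description precedes it below -/
import Mathlib

section
/- Let three hypotheses have entailed sets A₁, A₂, A₃ and sizes s₁, s₂, s₃ ∈ ℕ, where A₃ is a generalization of A₁ (A₁ ⊆ A₃). If, as integers, s₃ > |E⁺| + tn(A₁) − S_MDL(A₂,s₂), then S_MDL(A₂,s₂) > S_MDL(A₃,s₃). (Size threshold for pruning generalizations of A₁ under the MDL score.) -/
open Finset

variable {α : Type*}

/-- True positives: examples entailed by the hypothesis that are positive. -/
def tp [DecidableEq α] (Ep A : Finset α) : ℕ := (A ∩ Ep).card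

/-- True negatives: negative examples not entailed by the hypothesis. -/
def tn [DecidableEq α] (En A : Finset α) : ℕ := (En \ A).card

/-- False negatives: positive examples not entailed by the hypothesis. -/
def fnScore [DecidableEq α] (Ep A : Finset α) : ℕ := (Ep \ A).card

/-- False positives: negative examples entailed by the hypothesis. -/
def fpScore [DecidableEq α] (En A : Finset α) : ℕ := (A ∩ En).card

/-- Accuracy score. -/
def sAcc [DecidableEq α] (Ep En A : Finset α) : ℕ := tp Ep A + tn En A

/-- MDL score: accuracy minus hypothesis size, as an integer. -/
def sMdl [DecidableEq α] (Ep En A : Finset α) (s : ℕ) : ℤ := (tp Ep A + tn En A : ℤ) - s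

theorem tp_le_card [DecidableEq α] (Ep A : Finset α) : tp Ep A ≤ Ep.card :=
  card_le_card inter_subset_right

theorem tn_anti [DecidableEq α] (En : Finset α) : Antitone (tn En) :=
  fun _ _ hAB => card_le_card (sdiff_subset_sdiff subset_rfl hAB)

theorem sMdl_le_of_subset [DecidableEq α] (Ep En : Finset α) {A₁ A : Finset α} (hA : A₁ ⊆ A)
    (s : ℕ) : sMdl Ep En A s ≤ (Ep.card : ℤ) + (tn En A₁ : ℤ) - s := by
  have htp : tp Ep A ≤ Ep.card := tp_le_card Ep A
  have htn : tn En A ≤ tn En A₁ := tn_anti En hA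
  unfold sMdl
  omega

theorem mdl_generalization_size_threshold_general [DecidableEq α] (Ep En A1 A2 A3 : Finset α)
    (s2 s3 : ℕ) (hgen : A1 ⊆ A3)
    (h : (s3 : ℤ) > (Ep.card : ℤ) + (tn En A1 : ℤ) - sMdl Ep En A2 s2) :
    sMdl Ep En A2 s2 > sMdl Ep En A3 s3 := by
  have hA3 := sMdl_le_of_subset Ep En hgen s3
  omega

theorem mdl_generalization_size_threshold [DecidableEq α] (Ep En A1 A2 A3 : Finset α)
    (s1 s2 s3 : ℕ) (hgen : A1 ⊆ A3)
    (h : (s3 : ℤ) > (Ep.card : ℤ) + (tn En A1 : ℤ) - sMdl Ep En A2 s2) :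
    sMdl Ep En A2 s2 > sMdl Ep En A3 s3 :=
  mdl_generalization_size_threshold_general Ep En A1 A2 A3 s2 s3 hgen h
end

section
/- Let two hypotheses have entailed sets A, A' and sizes s, s' ∈ ℕ, where A' is a specialization of A (A' ⊆ A). If s' > fp(A) + s, then S_MDL(A,s) > S_MDL(A',s'). (Sufficiently large specializations of a hypothesis are never MDL-optimal.) -/
/-!
A specialization entails no new positive examples, and it can gain at most the negatives that
`A` wrongly entails: `tn En A' ≤ |En| = tn En A + fp En A`. So its accuracy exceeds that of `A` by
at most `fp En A`, which the extra size `s' - s` more than cancels.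
-/

open Finset

variable {α : Type*}

section

variable [DecidableEq α]

theorem tp_mono {Ep A' A : Finset α} (h : A' ⊆ A) : tp Ep A' ≤ tp Ep A :=
  card_le_card (inter_subset_inter_right h)

theorem tn_le_card (En A : Finset α) : tn En A ≤ En.card :=
  card_le_card sdiff_subset

theorem tn_add_fpScore (En A : Finset α) : tn En A + fpScore En A = En.card := by
  rw [tn, fpScore, inter_comm]
  exact card_sdiff_add_card_inter En A

theorem sAcc_le_of_subset (Ep En : Finset α) {A' A : Finset α} (h : A' ⊆ A) :
    sAcc Ep En A' ≤ sAcc Ep En A + fpScore En A := by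
  have htp := tp_mono (Ep := Ep) h
  have htn := tn_le_card En A'
  have hEn := tn_add_fpScore En A
  unfold sAcc
  omega

theorem sMdl_eq_sAcc_sub (Ep En A : Finset α) (s : ℕ) : sMdl Ep En A s = sAcc Ep En A - s := by
  simp [sMdl, sAcc]

end

theorem mdl_large_specializations_suboptimal [DecidableEq α] (Ep En A A' : Finset α)
    (s s' : ℕ) (hspec : A' ⊆ A) (hsize : s' > fpScore En A + s) :
    sMdl Ep En A s > sMdl Ep En A' s' := by
  have hacc := sAcc_le_of_subset Ep En hspec
  rw [sMdl_eq_sAcc_sub, sMdl_eq_sAcc_sub]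
  omega
end
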